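/- arXiv:2404.16982 — 7 statements merged into one kernel-verified Lean document; each statement's English description precedes it below -/
import Mathlib

section
/- For any commutative ring, variables a_0, a_1, a_2, ..., and nonnegative integer n, the polynomial identity z^n = \sum_{k=0}^{n} h_{n-k}(a_0,a_1,...,a_k) \prod_{i=0}^{k-1}(z - a_i) holds, where h_m denotes the complete homogeneous symmetric polynomial of degree m. -/
/-- Complete homogeneous symmetric polynomial of degree `m` in `a 0, ..., a k`. -/
def hsym {F : Type*} [CommRing F] (m k : ℕ) (a : ℕ → F) : F :=
  ∑ s ∈ (Finset.univ : Finset (Fin (k+1))).sym m,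
    ((s : Multiset (Fin (k+1))).map (fun i => a i.1)).prod

lemma hsym_zero {F : Type*} [CommRing F] (k : ℕ) (a : ℕ → F) : hsym 0 k a = 1 := by
  simp only [hsym, Finset.sym_zero, Finset.sum_singleton]
  rfl

lemma hsym_k_zero {F : Type*} [CommRing F] (m : ℕ) (a : ℕ → F) :
    hsym m 0 a = a 0 ^ m := by
  classical
  unfold hsym
  rw [Finset.sym_univ]
  have key : ∀ s : Sym (Fin 1) m, ((s : Multiset (Fin 1)).map (fun i => a i.1)).prod
      = a 0 ^ m := by
    intro s
    have : (s : Multiset (Fin 1)).map (fun i => a i.1)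
        = Multiset.map (fun _ => a 0) (s : Multiset (Fin 1)) := by
      apply Multiset.map_congr rfl
      intro x _
      rw [Subsingleton.elim x 0]
      rfl
    rw [this, Multiset.map_const', Multiset.prod_replicate]
    congr 1
    exact s.2
  haveI : Unique (Sym (Fin 1) m) := by
    refine ⟨⟨Sym.replicate m 0⟩, fun s => Subtype.ext ?_⟩
    rw [Sym.replicate]
    refine Multiset.eq_replicate.mpr ⟨s.2, fun b _ => Subsingleton.elim b 0⟩
  rw [Finset.sum_congr rfl (fun s _ => key s), Finset.sum_const, Finset.card_univ,
    Fintype.card_unique, one_smul]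

lemma hsym_rec {F : Type*} [CommRing F] (m k : ℕ) (a : ℕ → F) :
    hsym (m+1) (k+1) a = hsym (m+1) k a + a (k+1) * hsym m (k+1) a := by
  classical
  unfold hsym
  simp only [Finset.sym_univ]
  rw [← Finset.sum_filter_add_sum_filter_not Finset.univ
      (fun s : Sym (Fin (k+2)) (m+1) => Fin.last (k+1) ∉ s)]
  congr 1
  · have himg : Finset.univ.filter (fun s : Sym (Fin (k+2)) (m+1) => Fin.last (k+1) ∉ s)
        = Finset.image (Sym.map Fin.castSucc) Finset.univ := by
      ext s
      simp only [Finset.mem_filter, Finset.mem_univ, true_and, Finset.mem_image]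
      constructor
      · intro hs
        refine ⟨Sym.map (fun x => if h : x = Fin.last (k+1) then 0 else x.castPred h) s, ?_⟩
        rw [Sym.map_map]
        conv_rhs => rw [← Sym.map_id' s]
        apply Sym.map_congr
        intro x hx
        have hne : x ≠ Fin.last (k+1) := fun h => hs (h ▸ hx)
        simp [Function.comp, hne, Fin.castSucc_castPred]
      · rintro ⟨t, rfl⟩
        intro h
        rw [Sym.mem_map] at h
        obtain ⟨x, -, hx⟩ := h
        exact (Fin.castSucc_lt_last x).ne hx
    rw [himg, Finset.sum_image (fun x _ y _ h => Sym.map_injective (Fin.castSucc_injective _) _ h)]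
    apply Finset.sum_congr rfl
    intro t _
    simp [Sym.coe_map, Multiset.map_map]
  · have himg : Finset.univ.filter (fun s : Sym (Fin (k+2)) (m+1) => ¬ Fin.last (k+1) ∉ s)
        = Finset.image (Sym.cons (Fin.last (k+1))) Finset.univ := by
      ext s
      simp only [Finset.mem_filter, Finset.mem_univ, true_and, Finset.mem_image, not_not]
      constructor
      · intro hs
        exact ⟨s.erase _ hs, Sym.cons_erase hs⟩
      · rintro ⟨t, rfl⟩
        exact Sym.mem_cons_self _ _
    rw [himg, Finset.sum_image (fun x _ y _ h => (Sym.cons_inj_right _ _ _).mp h)]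
    rw [Finset.mul_sum]
    apply Finset.sum_congr rfl
    intro t _
    simp [Sym.coe_cons, Fin.val_last, mul_comm]

open Polynomial in
theorem stmt1 {R : Type*} [CommRing R] (a : ℕ → R) (n : ℕ) :
    (Polynomial.X : Polynomial R) ^ n =
      ∑ k ∈ Finset.range (n+1),
        Polynomial.C (hsym (n - k) k a) *
          ∏ i ∈ Finset.range k, (Polynomial.X - Polynomial.C (a i)) := by
  induction n with
  | zero => simp [hsym_zero]
  | succ n ih =>
    set P : ℕ → Polynomial R := fun k => ∏ i ∈ Finset.range k, (X - C (a i)) with hP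
    have hPsucc : ∀ k, P (k+1) = P k * (X - C (a k)) := fun k => Finset.prod_range_succ _ k
    have expand : ∀ k, X * (C (hsym (n - k) k a) * P k)
        = C (hsym (n - k) k a) * P (k+1) + C (a k * hsym (n - k) k a) * P k := by
      intro k
      rw [hPsucc k, map_mul]
      ring
    have hx : (X : Polynomial R) ^ (n+1) = X * X ^ n := by ring
    rw [hx, ih, Finset.mul_sum]
    rw [Finset.sum_congr rfl (fun k _ => expand k), Finset.sum_add_distrib]
    have h1 : ∑ k ∈ Finset.range (n+1), C (hsym (n - k) k a) * P (k+1)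
        = (∑ k ∈ Finset.range n, C (hsym (n - k) k a) * P (k+1)) + P (n+1) := by
      rw [Finset.sum_range_succ, Nat.sub_self, hsym_zero, map_one, one_mul]
    have h2 : ∑ k ∈ Finset.range (n+1), C (a k * hsym (n - k) k a) * P k
        = C (a 0 ^ (n+1)) + ∑ k ∈ Finset.range n, C (a (k+1) * hsym (n - (k+1)) (k+1) a) * P (k+1) := by
      rw [Finset.sum_range_succ', add_comm]
      congr 1
      have : P 0 = 1 := Finset.prod_range_zero _
      rw [this, mul_one, Nat.sub_zero, hsym_k_zero]
      rw [pow_succ, mul_comm]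
    have h3 : ∑ k ∈ Finset.range (n+2), C (hsym (n + 1 - k) k a) * P k
        = (∑ k ∈ Finset.range n, C (hsym (n - k) (k+1) a) * P (k+1)) + P (n+1)
          + C (a 0 ^ (n+1)) := by
      rw [Finset.sum_range_succ']
      have hP0 : P 0 = 1 := Finset.prod_range_zero _
      rw [hP0, mul_one, Nat.sub_zero, hsym_k_zero]
      congr 1
      have : ∀ k, n + 1 - (k + 1) = n - k := fun k => by omega
      simp only [this]
      rw [Finset.sum_range_succ, Nat.sub_self, hsym_zero, map_one, one_mul]
    rw [h1, h2, h3]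
    have key : ∀ k ∈ Finset.range n,
        C (hsym (n - k) k a) * P (k+1) + C (a (k+1) * hsym (n - (k+1)) (k+1) a) * P (k+1)
          = C (hsym (n - k) (k+1) a) * P (k+1) := by
      intro k hk
      have hk' : k < n := Finset.mem_range.mp hk
      have hnk : n - k = (n - (k+1)) + 1 := by omega
      rw [hnk, hsym_rec (n - (k+1)) k a, map_add, map_mul]
      ring
    have hsum := Finset.sum_congr rfl key
    rw [Finset.sum_add_distrib] at hsum
    linear_combination hsum
end

section
/- Let a_i for i \in \mathbb{Z} be elements of a field. Define the generalized Eulerian numbers A(n,k) by: A(n,k)=0 for k<0 or k>n, A(0,0)=1, and A(n+1,k) = a_{n-k+2} A(n,k-1) - a_{-k} P(n,k) A(n,k), where P(n,k) = \prod_{i=1}^{n+1} (a_{n-k+2} - a_{i-k})/(a_{n-k+1} - a_{i-1-k}). Assume all quantities a_{n-k+1} - a_{i-k} appearing as denominators are nonzero. Then the generalized Worpitzky identity z^n = \sum_{k=0}^{n} A(n,k) \prod_{i=1}^{n} (z - a_{i-k})/(a_{n-k+1} - a_{i-k}) holds as a polynomial identity in z. -/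
/-!
Write `Q n k = ∏_{i=1}^n (X - a_{i-k})`; the denominator in the statement is the value of `Q n k`
at the node `a_{n-k+1}`, and we set `c n k = A n k / Q n k (a_{n-k+1})`. Since
`Q (n+1) (k+1) = (X - a_{-k}) Q n k` and `Q (n+1) k = Q n k (X - a_{n-k+1})`, interpolating `X`
between the two nodes gives
`(a_{n-k+1} - a_{-k}) X Q n k = a_{n-k+1} Q (n+1) (k+1) - a_{-k} Q (n+1) k`.
Multiplying the expansion of `X^n` by `X` and collecting terms, the coefficient of `Q (n+1) k` is
`a_{n-k+2} c n (k-1) / (a_{n-k+2} - a_{1-k}) - a_{-k} c n k / (a_{n-k+1} - a_{-k})`, and this is the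
given recursion for `A` once the product in it is read as a ratio of node values of `Q`.
-/

open Finset Polynomial Function

section WorpitzkyBasis

variable {R : Type*} [CommRing R] (a : ℤ → R)

noncomputable def worpitzkyBasis (n : ℕ) (k : ℤ) : R[X] :=
  ∏ i ∈ Icc 1 n, (X - C (a (i - k)))

theorem eval_worpitzkyBasis (x : R) (n : ℕ) (k : ℤ) :
    (worpitzkyBasis a n k).eval x = ∏ i ∈ Icc 1 n, (x - a (i - k)) := by
  simp [worpitzkyBasis, eval_prod]

theorem worpitzkyBasis_succ (n : ℕ) (k : ℤ) :
    worpitzkyBasis a (n + 1) k = worpitzkyBasis a n k * (X - C (a (n - k + 1))) := by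
  rw [worpitzkyBasis, prod_Icc_succ_top (by omega), worpitzkyBasis, Nat.cast_succ,
    add_sub_right_comm]

theorem worpitzkyBasis_succ_succ (n : ℕ) (k : ℤ) :
    worpitzkyBasis a (n + 1) (k + 1) = (X - C (a (-k))) * worpitzkyBasis a n k := by
  induction n with
  | zero => simp [worpitzkyBasis]
  | succ n ih =>
    rw [worpitzkyBasis_succ, ih, worpitzkyBasis_succ, mul_assoc, Nat.cast_succ,
      add_sub_add_right_eq_sub]

theorem eval_worpitzkyBasis_succ_succ (x : R) (n : ℕ) (k : ℤ) :
    (worpitzkyBasis a (n + 1) (k + 1)).eval x = (x - a (-k)) * (worpitzkyBasis a n k).eval x := by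
  simp [worpitzkyBasis_succ_succ]

variable {a} in
theorem eval_worpitzkyBasis_ne_zero [IsDomain R] (ha : Injective a) (n : ℕ) (k : ℤ) :
    (worpitzkyBasis a n k).eval (a (n - k + 1)) ≠ 0 := by
  rw [eval_worpitzkyBasis, prod_ne_zero_iff]
  intro i hi
  refine sub_ne_zero.2 (ha.ne ?_)
  have := (mem_Icc.1 hi).2
  omega

theorem C_sub_mul_X_mul_worpitzkyBasis (n : ℕ) (k : ℤ) :
    C (a (n - k + 1) - a (-k)) * X * worpitzkyBasis a n k =
      C (a (n - k + 1)) * worpitzkyBasis a (n + 1) (k + 1) -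
        C (a (-k)) * worpitzkyBasis a (n + 1) k := by
  rw [worpitzkyBasis_succ_succ, worpitzkyBasis_succ, map_sub]
  ring

end WorpitzkyBasis

section Field

variable {F : Type*} [Field F] {a : ℤ → F}

theorem X_pow_eq_sum_C_mul_worpitzkyBasis (ha : Injective a) {c : ℕ → ℤ → F}
    (hinit : c 0 0 = 1) (hlow : ∀ n, c n (-1) = 0) (hhigh : ∀ n : ℕ, c n (n + 1) = 0)
    (hrec : ∀ (n : ℕ) (k : ℤ), 0 ≤ k → c (n + 1) k =
      a (n - k + 2) * (c n (k - 1) / (a (n - k + 2) - a (1 - k))) -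
        a (-k) * (c n k / (a (n - k + 1) - a (-k)))) (n : ℕ) :
    X ^ n = ∑ k ∈ range (n + 1), C (c n k) * worpitzkyBasis a n k := by
  induction n with
  | zero => simp [hinit, worpitzkyBasis]
  | succ n ih =>
    set w : ℤ → F := fun k => c n k / (a (n - k + 1) - a (-k))
    have hX (k : ℤ) : X * (C (c n k) * worpitzkyBasis a n k) =
        C (a (n - k + 1) * w k) * worpitzkyBasis a (n + 1) (k + 1) -
          C (a (-k) * w k) * worpitzkyBasis a (n + 1) k := by
      have hne : a (n - k + 1) - a (-k) ≠ 0 := sub_ne_zero.2 (ha.ne (by omega))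
      have hc : c n k = (a (n - k + 1) - a (-k)) * w k := (mul_div_cancel₀ _ hne).symm
      rw [hc, map_mul, map_mul, map_mul]
      linear_combination C (w k) * C_sub_mul_X_mul_worpitzkyBasis a n k
    calc X ^ (n + 1) = X * ∑ k ∈ range (n + 1), C (c n k) * worpitzkyBasis a n k := by
          rw [pow_succ', ih]
      _ = ∑ k ∈ range (n + 1), C (a (n - k + 1) * w k) * worpitzkyBasis a (n + 1) (k + 1) -
          ∑ k ∈ range (n + 1), C (a (-k) * w k) * worpitzkyBasis a (n + 1) k := by
        rw [mul_sum, ← sum_sub_distrib]; exact sum_congr rfl fun k _ => hX k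
      _ = ∑ k ∈ range (n + 2), C (a (n - k + 2) * w (k - 1)) * worpitzkyBasis a (n + 1) k -
          ∑ k ∈ range (n + 2), C (a (-k) * w k) * worpitzkyBasis a (n + 1) k := by
        have hw_low : w (-1) = 0 := by simp [w, hlow]
        have hw_high : w (n + 1) = 0 := by simp [w, hhigh]
        rw [sum_range_succ' _ (n + 1), sum_range_succ _ (n + 1)]
        push_cast
        simp only [hw_low, hw_high, add_sub_cancel_right, mul_zero, map_zero, zero_mul,
          add_zero]
        ring_nf
      _ = _ := by
        rw [← sum_sub_distrib]
        refine sum_congr rfl fun k _ => ?_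
        rw [hrec n k k.cast_nonneg, ← sub_mul, ← map_sub]
        simp only [w]
        ring_nf

variable (a) in
noncomputable def worpitzkyCoeff (A : ℕ → ℤ → F) (n : ℕ) (k : ℤ) : F :=
  A n k / (worpitzkyBasis a n k).eval (a (n - k + 1))

theorem worpitzkyCoeff_succ (ha : Injective a) (A : ℕ → ℤ → F) (n : ℕ) {k : ℤ}
    (hA : A (n + 1) k = a (n - k + 2) * A n (k - 1) -
      a (-k) * (∏ i ∈ Icc 1 (n + 1), (a (n - k + 2) - a (i - k)) /
        (a (n - k + 1) - a (i - 1 - k))) * A n k) :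
    worpitzkyCoeff a A (n + 1) k =
      a (n - k + 2) * (worpitzkyCoeff a A n (k - 1) / (a (n - k + 2) - a (1 - k))) -
        a (-k) * (worpitzkyCoeff a A n k / (a (n - k + 1) - a (-k))) := by
  have hnum : ∏ i ∈ Icc 1 (n + 1), (a (n - k + 2) - a (i - k)) =
      (worpitzkyBasis a (n + 1) k).eval (a ((n + 1 : ℕ) - k + 1)) := by
    rw [eval_worpitzkyBasis]; push_cast; ring_nf
  have hden : ∏ i ∈ Icc 1 (n + 1), (a (n - k + 1) - a (i - 1 - k)) =
      (a (n - k + 1) - a (-k)) * (worpitzkyBasis a n k).eval (a (n - k + 1)) := by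
    rw [← eval_worpitzkyBasis_succ_succ, eval_worpitzkyBasis]; ring_nf
  have hnode : (worpitzkyBasis a (n + 1) k).eval (a ((n + 1 : ℕ) - k + 1)) =
      (a (n - k + 2) - a (1 - k)) * (worpitzkyBasis a n (k - 1)).eval (a (n - (k - 1) + 1)) := by
    obtain ⟨j, rfl⟩ : ∃ j, k = j + 1 := ⟨k - 1, by ring⟩
    rw [eval_worpitzkyBasis_succ_succ]; push_cast; ring_nf
  have h₁ := eval_worpitzkyBasis_ne_zero ha n k
  have h₂ := eval_worpitzkyBasis_ne_zero ha n (k - 1)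
  have h₃ : a (n - k + 1) - a (-k) ≠ 0 := sub_ne_zero.2 (ha.ne (by omega))
  have h₄ : a (n - k + 2) - a (1 - k) ≠ 0 := sub_ne_zero.2 (ha.ne (by omega))
  unfold worpitzkyCoeff
  rw [hA, prod_div_distrib, hnum, hden, hnode]
  field_simp

end Field

theorem stmt9 {F : Type*} [Field F] (a : ℤ → F)
    (hdist : ∀ i j : ℤ, i ≠ j → a i ≠ a j)
    (A : ℕ → ℤ → F)
    (hbound : ∀ (n : ℕ) (k : ℤ), (k < 0 ∨ (n : ℤ) < k) → A n k = 0)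
    (hinit : A 0 0 = 1)
    (hrec : ∀ (n : ℕ) (k : ℤ), 0 ≤ k →
      A (n+1) k = a ((n : ℤ) - k + 2) * A n (k-1) -
        a (-k) * (∏ i ∈ Finset.Icc 1 (n+1),
            (a ((n : ℤ) - k + 2) - a ((i : ℤ) - k)) /
              (a ((n : ℤ) - k + 1) - a ((i : ℤ) - 1 - k))) * A n k) :
    ∀ n : ℕ, (Polynomial.X : Polynomial F) ^ n =
      ∑ k ∈ Finset.range (n+1),
        Polynomial.C (A n k / ∏ i ∈ Finset.Icc 1 n,
            (a ((n : ℤ) - k + 1) - a ((i : ℤ) - k))) *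
          ∏ i ∈ Finset.Icc 1 n,
            (Polynomial.X - Polynomial.C (a ((i : ℤ) - k))) := by
  intro n
  have ha : Injective a := fun i j h => by_contra fun hne => hdist i j hne h
  have hexp := X_pow_eq_sum_C_mul_worpitzkyBasis ha (c := worpitzkyCoeff a A)
    (by simp [worpitzkyCoeff, worpitzkyBasis, hinit])
    (fun n => by simp [worpitzkyCoeff, hbound n (-1) (Or.inl (by norm_num))])
    (fun n => by simp [worpitzkyCoeff, hbound n (n + 1) (Or.inr (by omega))])
    (fun n k hk => worpitzkyCoeff_succ ha A n (hrec n k hk)) n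
  simp only [worpitzkyCoeff, eval_worpitzkyBasis] at hexp
  exact hexp
end

section
/- Let a_i for i \in \mathbb{Z} be pairwise distinct elements of a field, and define A(n,k) as the connection coefficients in z^n = \sum_{k=0}^{n} A(n,k) \prod_{i=1}^{n} (z - a_{i-k})/(a_{n-k+1} - a_{i-k}). Then for 0 \le k \le n, A(n,k) = \sum_{j=0}^{k} \left( \prod_{i=0, i\neq k-j}^{n} (a_{n-k+1} - a_{i-k})/(a_{-j} - a_{i-k}) \right) a_{-j}^n. -/
/-!
Write `p_k = ∏_{i=1}^n (X - a_{i-k})`, which vanishes at `a_t` exactly when `1 ≤ t + k ≤ n`, and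
let `S_l = ∑_{k ≤ l} A_k p_k / p_k(a_{n-k+1})`, a polynomial of degree at most `n`. At
`a_{n-l+1}` only the term `k = l` of `S_l` survives, so `S_l(a_{n-l+1}) = A_l`. At the nodes
`a_{-l}, …, a_0` the terms `k > l` of the expansion of `X ^ n` vanish, so `S_l` agrees with
`X ^ n` there, while every term of `S_l` vanishes at `a_1, …, a_{n-l}`. Lagrange interpolation
of `S_l` on the `n + 1` nodes `a_{-l}, …, a_{n-l}`, evaluated at `a_{n-l+1}`, is the formula.
-/

open Polynomial Finset

theorem Lagrange.eval_eq_sum_mul_prod_div {F ι : Type*} [Field F] [DecidableEq ι]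
    {s : Finset ι} {v : ι → F} (hvs : Set.InjOn v s) {f : F[X]} (hf : f.degree < #s) (x : F) :
    f.eval x = ∑ i ∈ s, f.eval (v i) * ∏ j ∈ s.erase i, (x - v j) / (v i - v j) := by
  conv_lhs => rw [Lagrange.eq_interpolate hvs hf]
  simp only [Lagrange.interpolate_apply, eval_finsetSum, eval_mul, eval_C, Lagrange.basis,
    eval_prod, Lagrange.basisDivisor, eval_X, eval_sub]
  refine sum_congr rfl fun i _ => congrArg _ (prod_congr rfl fun j _ => ?_)
  rw [div_eq_inv_mul]

namespace ConnectionCoefficients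

variable {F : Type*} [Field F] (a : ℤ → F) (n : ℕ)

noncomputable def shiftedNodal (k : ℕ) : F[X] :=
  Lagrange.nodal (Icc 1 n) fun i : ℕ => a (i - k)

noncomputable def expansionTerm (A : ℕ → F) (k : ℕ) : F[X] :=
  C (A k / (shiftedNodal a n k).eval (a (n - k + 1))) * shiftedNodal a n k

noncomputable def partialExpansion (A : ℕ → F) (l : ℕ) : F[X] :=
  ∑ k ∈ range (l + 1), expansionTerm a n A k

variable {a n}

theorem eval_shiftedNodal_eq_zero {k : ℕ} {t : ℤ} (h₁ : 1 ≤ t + k) (h₂ : t + k ≤ n) :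
    (shiftedNodal a n k).eval (a t) = 0 := by
  have hmem : (t + k).toNat ∈ Icc 1 n := mem_Icc.2 ⟨by omega, by omega⟩
  have := Lagrange.eval_nodal_at_node (v := fun i : ℕ => a (i - k)) hmem
  rwa [show ((t + k).toNat : ℤ) - k = t by omega] at this

theorem eval_shiftedNodal_ne_zero (ha : Function.Injective a) {k : ℕ} {t : ℤ}
    (h : t + k < 1 ∨ n < t + k) : (shiftedNodal a n k).eval (a t) ≠ 0 :=
  Lagrange.eval_nodal_not_at_node fun i hi he => by
    have := ha he
    simp only [mem_Icc] at hi
    omega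

theorem natDegree_shiftedNodal_le (k : ℕ) : (shiftedNodal a n k).natDegree ≤ n := by
  simp [shiftedNodal, Lagrange.natDegree_nodal]

theorem degree_partialExpansion_lt (A : ℕ → F) (l : ℕ) :
    (partialExpansion a n A l).degree < ↑(n + 1) := by
  refine (degree_le_of_natDegree_le (natDegree_sum_le_of_forall_le _ _ fun k _ => ?_)).trans_lt
    (by exact_mod_cast n.lt_succ_self)
  exact (natDegree_C_mul_le _ _).trans (natDegree_shiftedNodal_le k)

theorem eval_expansionTerm_eq_zero (A : ℕ → F) {k : ℕ} {t : ℤ} (h₁ : 1 ≤ t + k)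
    (h₂ : t + k ≤ n) : (expansionTerm a n A k).eval (a t) = 0 := by
  rw [expansionTerm, eval_mul, eval_shiftedNodal_eq_zero h₁ h₂, mul_zero]

theorem eval_partialExpansion_self (ha : Function.Injective a) (A : ℕ → F) {l : ℕ} (hl : l ≤ n) :
    (partialExpansion a n A l).eval (a (n - l + 1)) = A l := by
  rw [partialExpansion, sum_range_succ, eval_add, eval_finsetSum, sum_eq_zero, zero_add,
    expansionTerm, eval_mul, eval_C, div_mul_cancel₀ _ (eval_shiftedNodal_ne_zero ha (by omega))]
  intro k hk
  rw [mem_range] at hk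
  exact eval_expansionTerm_eq_zero A (by omega) (by omega)

theorem eval_partialExpansion_eq_zero (A : ℕ → F) {l i : ℕ} (hli : l < i) (hi : i ≤ n) :
    (partialExpansion a n A l).eval (a (i - l)) = 0 := by
  rw [partialExpansion, eval_finsetSum]
  refine sum_eq_zero fun k hk => ?_
  rw [mem_range] at hk
  exact eval_expansionTerm_eq_zero A (by omega) (by omega)

theorem eval_partialExpansion_of_le {A : ℕ → F} (hX : (X : F[X]) ^ n = partialExpansion a n A n)
    {l i : ℕ} (hil : i ≤ l) (hl : l ≤ n) :
    (partialExpansion a n A l).eval (a (i - l)) = a (i - l) ^ n := by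
  have htail : ∀ k ∈ Ico (l + 1) (n + 1), (expansionTerm a n A k).eval (a (i - l)) = 0 :=
    fun k hk => by
      rw [mem_Ico] at hk
      exact eval_expansionTerm_eq_zero A (by omega) (by omega)
  have hsplit := congrArg (eval (a (i - l))) hX
  rw [partialExpansion, ← sum_range_add_sum_Ico _ (by omega : l + 1 ≤ n + 1), eval_add,
    eval_finsetSum (Ico _ _), sum_eq_zero htail, add_zero, eval_pow, eval_X] at hsplit
  exact hsplit.symm

theorem eq_sum_of_X_pow_eq_partialExpansion (ha : Function.Injective a) {A : ℕ → F}
    (hX : (X : F[X]) ^ n = partialExpansion a n A n) {l : ℕ} (hl : l ≤ n) :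
    A l = ∑ j ∈ range (l + 1),
      (∏ i ∈ (range (n + 1)).erase (l - j),
        (a (n - l + 1) - a (i - l)) / (a (-j) - a (i - l))) * a (-j) ^ n := by
  have hinj : Set.InjOn (fun i : ℕ => a (i - l)) (range (n + 1)) := fun i _ j _ h => by
    have := ha h
    omega
  calc A l = (partialExpansion a n A l).eval (a (n - l + 1)) :=
        (eval_partialExpansion_self ha A hl).symm
    _ = ∑ i ∈ range (n + 1), (partialExpansion a n A l).eval (a (i - l)) *
          ∏ j ∈ (range (n + 1)).erase i, (a (n - l + 1) - a (j - l)) / (a (i - l) - a (j - l)) :=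
        Lagrange.eval_eq_sum_mul_prod_div hinj (by simpa using degree_partialExpansion_lt A l) _
    _ = ∑ i ∈ range (l + 1), a (i - l) ^ n *
          ∏ j ∈ (range (n + 1)).erase i, (a (n - l + 1) - a (j - l)) / (a (i - l) - a (j - l)) := by
        refine (sum_subset (range_subset_range.2 (by omega)) fun i hi hil => ?_).symm.trans
          (sum_congr rfl fun i hi => ?_)
        · rw [mem_range] at hi hil
          rw [eval_partialExpansion_eq_zero A (by omega) (by omega), zero_mul]
        · rw [mem_range] at hi
          rw [eval_partialExpansion_of_le hX (by omega) hl]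
    _ = _ := by
        rw [← sum_range_reflect]
        refine sum_congr rfl fun j hj => ?_
        rw [mem_range] at hj
        rw [mul_comm, show l + 1 - 1 - j = l - j by omega,
          show ((l - j : ℕ) : ℤ) - l = -j by omega]

end ConnectionCoefficients

theorem stmt10 {F : Type*} [Field F] (a : ℤ → F)
    (hdist : ∀ i j : ℤ, i ≠ j → a i ≠ a j)
    (n : ℕ) (A : ℕ → F)
    (hcon : (Polynomial.X : Polynomial F) ^ n =
      ∑ k ∈ Finset.range (n+1),
        Polynomial.C (A k / ∏ i ∈ Finset.Icc 1 n,
            (a ((n : ℤ) - k + 1) - a ((i : ℤ) - k))) *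
          ∏ i ∈ Finset.Icc 1 n,
            (Polynomial.X - Polynomial.C (a ((i : ℤ) - k)))) :
    ∀ k : ℕ, k ≤ n →
      A k = ∑ j ∈ Finset.range (k+1),
        (∏ i ∈ (Finset.range (n+1)).erase (k - j),
            (a ((n : ℤ) - k + 1) - a ((i : ℤ) - k)) /
              (a (-(j : ℤ)) - a ((i : ℤ) - k))) * a (-(j : ℤ)) ^ n := by
  have ha : Function.Injective a := fun i j h => by_contra fun hne => hdist i j hne h
  have hX : (X : F[X]) ^ n = ConnectionCoefficients.partialExpansion a n A n := by
    rw [hcon]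
    simp only [ConnectionCoefficients.partialExpansion, ConnectionCoefficients.expansionTerm,
      ConnectionCoefficients.shiftedNodal, Lagrange.nodal, eval_prod, eval_sub, eval_X, eval_C]
  exact fun k hk => ConnectionCoefficients.eq_sum_of_X_pow_eq_partialExpansion ha hX hk
end

section
/- Let a_i (i \in \mathbb{Z}) be pairwise distinct elements of a field. Then \sum_{j=l}^{k} \left( \prod_{i=0, i\neq k-j}^{n} (a_{n-k+1} - a_{i-k})/(a_{-j} - a_{i-k}) \right) \prod_{i=1}^{n} (a_{-j} - a_{i-l})/(a_{n-l+1} - a_{i-l}) = \delta_{k,l} for all 0 \le l \le k \le n, where \delta_{k,l} is the Kronecker delta. -/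
theorem stmt11 {F : Type*} [Field F] (a : ℤ → F)
    (hdist : ∀ i j : ℤ, i ≠ j → a i ≠ a j)
    (n k l : ℕ) (hlk : l ≤ k) (hkn : k ≤ n) :
    ∑ j ∈ Finset.Icc l k,
      (∏ i ∈ (Finset.range (n+1)).erase (k - j),
          (a ((n : ℤ) - k + 1) - a ((i : ℤ) - k)) /
            (a (-(j : ℤ)) - a ((i : ℤ) - k))) *
        ∏ i ∈ Finset.Icc 1 n,
          (a (-(j : ℤ)) - a ((i : ℤ) - l)) /
            (a ((n : ℤ) - l + 1) - a ((i : ℤ) - l)) =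
      if k = l then 1 else 0 := by
  classical
  set z : F := a ((n : ℤ) - k + 1) with hz
  set v : ℕ → F := fun m => a ((m : ℤ) - k) with hv
  have hvInj : Set.InjOn v (Finset.range (n+1)) := by
    intro x _ y _ hxy
    by_contra h
    exact hdist ((x : ℤ) - k) ((y : ℤ) - k) (by omega) hxy
  set c : F := ∏ i ∈ Finset.Icc 1 n, (a ((n : ℤ) - l + 1) - a ((i : ℤ) - l)) with hc
  have hcne : c ≠ 0 := by
    rw [hc]
    apply Finset.prod_ne_zero_iff.mpr
    intro i hi
    simp only [Finset.mem_Icc] at hi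
    exact sub_ne_zero.mpr (hdist _ _ (by omega))
  set f : Polynomial F :=
    Polynomial.C c⁻¹ *
      ∏ i ∈ Finset.Icc 1 n, (Polynomial.X - Polynomial.C (a ((i : ℤ) - l))) with hf
  have hfeval : ∀ x : F,
      f.eval x = c⁻¹ * ∏ i ∈ Finset.Icc 1 n, (x - a ((i : ℤ) - l)) := by
    intro x
    simp [hf, Polynomial.eval_prod]
  have hfdeg : f.degree < (Finset.range (n+1)).card := by
    rw [Finset.card_range]
    have h1 : f.degree ≤ 0 + (n : WithBot ℕ) := by
      rw [hf, Polynomial.degree_mul, Polynomial.degree_prod]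
      have : ∀ i ∈ Finset.Icc 1 n,
          (Polynomial.X - Polynomial.C (a ((i : ℤ) - l))).degree = 1 := fun i _ =>
        Polynomial.degree_X_sub_C _
      rw [Finset.sum_congr rfl this]
      simp [Polynomial.degree_C (inv_ne_zero hcne)]
    refine lt_of_le_of_lt h1 ?_
    rw [zero_add]
    exact_mod_cast WithBot.coe_lt_coe.mpr (Nat.lt_succ_self n)
  set g : ℕ → F := fun m =>
    Polynomial.eval z (Lagrange.basis (Finset.range (n+1)) v m) * f.eval (v m) with hg
  -- each term of the sum equals g (k - j)
  have hterm : ∀ j ∈ Finset.Icc l k,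
      (∏ i ∈ (Finset.range (n+1)).erase (k - j),
          (a ((n : ℤ) - k + 1) - a ((i : ℤ) - k)) /
            (a (-(j : ℤ)) - a ((i : ℤ) - k))) *
        ∏ i ∈ Finset.Icc 1 n,
          (a (-(j : ℤ)) - a ((i : ℤ) - l)) /
            (a ((n : ℤ) - l + 1) - a ((i : ℤ) - l)) = g (k - j) := by
    intro j hj
    simp only [Finset.mem_Icc] at hj
    have hcast : ((k - j : ℕ) : ℤ) - k = -(j : ℤ) := by omega
    have hvkj : v (k - j) = a (-(j : ℤ)) := by rw [hv]; simp only [hcast]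
    congr 1
    · unfold Lagrange.basis
      rw [Polynomial.eval_prod]
      refine Finset.prod_congr rfl fun i _ => ?_
      simp [Lagrange.basisDivisor, hv, hcast, div_eq_inv_mul, hz]
    · rw [hfeval]
      simp only [hvkj]
      rw [Finset.prod_div_distrib, div_eq_inv_mul, ← hc]
  rw [Finset.sum_congr rfl hterm]
  -- g m = 0 for m between k - l + 1 and n
  have hzero : ∀ m, k - l + 1 ≤ m → m ≤ n → g m = 0 := by
    intro m h1 h2
    have hi0 : m + l - k ∈ Finset.Icc 1 n := by
      simp only [Finset.mem_Icc]; omega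
    have hev : f.eval (v m) = 0 := by
      rw [hfeval]
      rw [Finset.prod_eq_zero hi0 (by
        have hc2 : ((m + l - k : ℕ) : ℤ) - l = (m : ℤ) - k := by omega
        rw [hv]; simp only [hc2, sub_self])]
      rw [mul_zero]
    rw [hg]
    simp only []
    rw [hev, mul_zero]
  -- reindex the sum
  have hsub : Finset.range (k - l + 1) ⊆ Finset.range (n+1) := by
    intro m hm
    simp only [Finset.mem_range] at *
    omega
  have h2 : ∑ m ∈ Finset.range (n+1), g m = ∑ m ∈ Finset.range (k - l + 1), g m := by
    refine (Finset.sum_subset hsub ?_).symm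
    intro m hm hm2
    simp only [Finset.mem_range] at hm hm2
    exact hzero m (by omega) (by omega)
  have h3 : ∑ j ∈ Finset.Icc l k, g (k - j) = ∑ m ∈ Finset.range (k - l + 1), g m := by
    refine Finset.sum_nbij' (fun j => k - j) (fun m => k - m) ?_ ?_ ?_ ?_ ?_
    · intro j hj
      simp only [Finset.mem_Icc, Finset.mem_range] at *
      omega
    · intro m hm
      simp only [Finset.mem_Icc, Finset.mem_range] at *
      omega
    · intro j hj
      simp only [Finset.mem_Icc] at hj
      show k - (k - j) = j
      omega
    · intro m hm
      simp only [Finset.mem_range] at hm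
      show k - (k - m) = m
      omega
    · intro j _
      rfl
  rw [h3, ← h2]
  -- the full sum is the Lagrange interpolation of f evaluated at z
  have hsum : ∑ m ∈ Finset.range (n+1), g m = Polynomial.eval z f := by
    have hfi := Lagrange.eq_interpolate (v := v) (s := Finset.range (n+1)) (f := f) hvInj hfdeg
    conv_rhs => rw [hfi]
    rw [Lagrange.interpolate_apply, Polynomial.eval_finset_sum]
    refine Finset.sum_congr rfl fun m _ => ?_
    rw [Polynomial.eval_mul, Polynomial.eval_C, mul_comm, hg]
  rw [hsum, hfeval]
  by_cases hkl : k = l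
  · subst hkl
    simp only [if_pos rfl]
    rw [hz, ← hc]
    exact inv_mul_cancel₀ hcne
  · rw [if_neg hkl]
    have hlt : l < k := lt_of_le_of_ne hlk (Ne.symm hkl)
    have hi0 : n - k + 1 + l ∈ Finset.Icc 1 n := by
      simp only [Finset.mem_Icc]; omega
    rw [Finset.prod_eq_zero hi0 (by
      have hc3 : ((n - k + 1 + l : ℕ) : ℤ) - l = (n : ℤ) - k + 1 := by omega
      rw [hz, hc3, sub_self])]
    rw [mul_zero]
end

section
/- The r-Whitney Eulerian numbers A_{m,r}(n,k), defined by A_{m,r}(n,k)=0 for k<0 or k>n, A_{m,r}(0,0)=1, and A_{m,r}(n+1,k) = (m(n-k+2)-r) A_{m,r}(n,k-1) + (mk+r) A_{m,r}(n,k), satisfy the Worpitzky-type identity (mx - r)^n = \sum_{k=0}^{n} A_{m,r}(n,k) \binom{x+k-1}{n} as a polynomial identity in x. -/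
open Polynomial Finset

private noncomputable def Pfun {R : Type*} [CommRing R] (n : ℕ) (k : ℤ) : Polynomial R :=
  ∏ i ∈ Finset.range n, (Polynomial.X + Polynomial.C ((k : R) - 1 - (i : R)))

private lemma Pkey {R : Type*} [CommRing R] (m r : R) (n : ℕ) (k : ℤ) :
    (Polynomial.C m * Polynomial.X - Polynomial.C r) * Pfun n k * Polynomial.C ((n : R) + 1) =
      Polynomial.C (m * ((n : R) + 1 - (k : R)) - r) * Pfun (n+1) (k+1) +
      Polynomial.C (m * (k : R) + r) * Pfun (n+1) k := by
  have h1 : (Pfun (n+1) (k+1) : Polynomial R) = (Polynomial.X + Polynomial.C (k : R)) * Pfun n k := by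
    rw [Pfun, Finset.prod_range_succ']
    push_cast
    rw [mul_comm]
    congr 1
    · congr 1; ring
    · apply Finset.prod_congr rfl; intro i _; push_cast; ring_nf
  have h2 : (Pfun (n+1) k : Polynomial R) = Pfun n k * (Polynomial.X + Polynomial.C ((k : R) - 1 - (n : R))) := by
    rw [Pfun, Finset.prod_range_succ]; rfl
  rw [h1, h2]
  simp only [map_add, map_sub, map_mul, map_one, map_natCast]
  ring

private lemma main_lemma {R : Type*} [CommRing R] (m r : R)
    (A : ℕ → ℤ → R)
    (hbound : ∀ (n : ℕ) (k : ℤ), (k < 0 ∨ (n : ℤ) < k) → A n k = 0)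
    (hinit : A 0 0 = 1)
    (hrec : ∀ (n : ℕ) (k : ℤ), 0 ≤ k →
      A (n+1) k = (m * ((n : R) - (k : ℤ) + 2) - r) * A n (k-1) +
        (m * (k : ℤ) + r) * A n k) :
    ∀ n : ℕ, (Polynomial.C m * Polynomial.X - Polynomial.C r : Polynomial R) ^ n *
        Polynomial.C ((n.factorial : R)) =
      ∑ k ∈ Finset.range (n+1), Polynomial.C (A n k) * Pfun n k := by
  intro n
  induction n with
  | zero => simp [Pfun, hinit]
  | succ n ih =>
    have hfac : ((n+1).factorial : R) = ((n : R) + 1) * (n.factorial : R) := by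
      rw [Nat.factorial_succ]; push_cast; ring
    have step1 : (Polynomial.C m * Polynomial.X - Polynomial.C r : Polynomial R) ^ (n+1) *
        Polynomial.C (((n+1).factorial : R)) =
        ∑ k ∈ Finset.range (n+1),
          (Polynomial.C (A n k * (m * ((n : R) + 1 - (k : R)) - r)) * Pfun (n+1) ((k : ℤ)+1) +
           Polynomial.C (A n k * (m * (k : R) + r)) * Pfun (n+1) k) := by
      have : (Polynomial.C m * Polynomial.X - Polynomial.C r : Polynomial R) ^ (n+1) *
          Polynomial.C (((n+1).factorial : R)) =
          (Polynomial.C m * Polynomial.X - Polynomial.C r) * Polynomial.C ((n:R)+1) *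
          ((Polynomial.C m * Polynomial.X - Polynomial.C r) ^ n * Polynomial.C ((n.factorial : R))) := by
        rw [hfac]; simp only [map_mul]; ring
      rw [this, ih, Finset.mul_sum]
      apply Finset.sum_congr rfl
      intro k _
      have := Pkey m r n (k : ℤ)
      push_cast at this ⊢
      calc (Polynomial.C m * Polynomial.X - Polynomial.C r) * Polynomial.C ((n:R)+1) *
            (Polynomial.C (A n k) * Pfun n k)
          = Polynomial.C (A n k) * ((Polynomial.C m * Polynomial.X - Polynomial.C r) * Pfun n k *
              Polynomial.C ((n:R)+1)) := by ring
        _ = _ := by rw [this]; simp only [map_mul, map_add, map_sub]; ring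
    rw [step1, Finset.sum_add_distrib]
    have sumA : ∑ k ∈ Finset.range (n+1),
        Polynomial.C (A n k * (m * ((n : R) + 1 - (k : R)) - r)) * Pfun (n+1) ((k : ℤ)+1) =
        ∑ j ∈ Finset.range (n+2),
          Polynomial.C (A n ((j : ℤ) - 1) * (m * ((n : R) + 2 - (j : R)) - r)) * Pfun (n+1) j := by
      rw [Finset.sum_range_succ' (n := n+1)]
      have h0 : A n (((0:ℕ):ℤ) - 1) = 0 := hbound n _ (Or.inl (by norm_num))
      rw [h0]
      simp only [zero_mul, map_zero, zero_mul, add_zero]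
      apply Finset.sum_congr rfl
      intro j _
      push_cast
      ring_nf
    rw [sumA]
    have sumB : ∑ k ∈ Finset.range (n+1),
        Polynomial.C (A n k * (m * (k : R) + r)) * Pfun (n+1) (k : ℤ) =
        ∑ j ∈ Finset.range (n+2),
          Polynomial.C (A n (j : ℤ) * (m * (j : R) + r)) * Pfun (n+1) j := by
      rw [Finset.sum_range_succ (n := n+1)]
      have h0 : A n ((n+1 : ℕ) : ℤ) = 0 := hbound n _ (Or.inr (by push_cast; omega))
      rw [h0]
      simp
    rw [sumB, ← Finset.sum_add_distrib]
    apply Finset.sum_congr rfl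
    intro j _
    rw [hrec n (j : ℤ) (by positivity)]
    push_cast
    simp only [map_add, map_mul]
    ring

theorem stmt15 {R : Type*} [CommRing R] [Algebra ℚ R] (m r : R)
    (A : ℕ → ℤ → R)
    (hbound : ∀ (n : ℕ) (k : ℤ), (k < 0 ∨ (n : ℤ) < k) → A n k = 0)
    (hinit : A 0 0 = 1)
    (hrec : ∀ (n : ℕ) (k : ℤ), 0 ≤ k →
      A (n+1) k = (m * ((n : R) - (k : ℤ) + 2) - r) * A n (k-1) +
        (m * (k : ℤ) + r) * A n k) :
    ∀ n : ℕ, (Polynomial.C m * Polynomial.X - Polynomial.C r : Polynomial R) ^ n =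
      ∑ k ∈ Finset.range (n+1),
        Polynomial.C (A n k) *
          (Polynomial.C (algebraMap ℚ R (n.factorial : ℚ)⁻¹) *
            ∏ i ∈ Finset.range n,
              (Polynomial.X + Polynomial.C ((k : R) - 1 - (i : R)))) := by
  intro n
  have key := main_lemma m r A hbound hinit hrec n
  have hinv : (algebraMap ℚ R (n.factorial : ℚ)⁻¹) * ((n.factorial : R)) = 1 := by
    rw [show ((n.factorial : R)) = algebraMap ℚ R (n.factorial : ℚ) by simp,
      ← map_mul, inv_mul_cancel₀ (by exact_mod_cast n.factorial_ne_zero), map_one]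
  calc (Polynomial.C m * Polynomial.X - Polynomial.C r : Polynomial R) ^ n
      = (Polynomial.C m * Polynomial.X - Polynomial.C r) ^ n * Polynomial.C ((n.factorial : R)) *
        Polynomial.C (algebraMap ℚ R (n.factorial : ℚ)⁻¹) := by
        rw [mul_assoc, ← map_mul, mul_comm ((n.factorial : R)), hinv, map_one, mul_one]
    _ = _ := by
        rw [key, Finset.sum_mul]
        apply Finset.sum_congr rfl
        intro k _
        have hP : (Pfun n (k:ℤ) : Polynomial R) =
            ∏ i ∈ Finset.range n, (Polynomial.X + Polynomial.C ((k:R) - 1 - (i:R))) := by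
          rw [Pfun]; push_cast; rfl
        rw [hP]; ring
end

section
/- The r-Whitney Eulerian numbers satisfy A_{m,r}(n,k) = \sum_{j=0}^{k} (-1)^j \binom{n+1}{j} (m(k-j)+r)^n for 0 \le k \le n, where A_{m,r} is defined by the recursion A_{m,r}(n,k)=0 for k<0 or k>n, A_{m,r}(0,0)=1, A_{m,r}(n+1,k)=(m(n-k+2)-r)A_{m,r}(n,k-1)+(mk+r)A_{m,r}(n,k). -/
open Finset Function

open Finset Function fwdDiff

lemma pow_fwdDiff_vanish {R : Type*} [CommRing R] (h : R) :
    ∀ n k : ℕ, n < k → (fwdDiff h)^[k] (fun x : R => x ^ n) = 0 := by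
  intro n
  induction n using Nat.strong_induction_on with
  | _ n IH =>
    have key : (fwdDiff h)^[n+1] (fun x : R => x ^ n) = 0 := by
      match n with
      | 0 =>
        funext x
        simp [fwdDiff]
      | Nat.succ m =>
        have hΔ : fwdDiff h (fun x : R => x ^ (m+1)) =
            ∑ i ∈ range (m+1), (h ^ (m+1-i) * ((m+1).choose i : R)) • (fun x : R => x ^ i) := by
          funext x
          simp only [fwdDiff, Finset.sum_apply, Pi.smul_apply, smul_eq_mul]
          rw [add_pow]
          rw [Finset.sum_range_succ]
          simp only [Nat.choose_self, Nat.cast_one, Nat.sub_self, pow_zero, mul_one]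
          rw [add_sub_cancel_right]
          exact Finset.sum_congr rfl fun i _ => by ring
        rw [show m + 1 + 1 = (m+1) + 1 from rfl, Function.iterate_succ_apply, hΔ,
          fwdDiff_iter_finset_sum]
        refine Finset.sum_eq_zero fun i hi => ?_
        rw [fwdDiff_iter_const_smul, IH i (Finset.mem_range.mp hi) (m+1) (Finset.mem_range.mp hi),
          smul_zero]
    intro k hk
    obtain ⟨j, rfl⟩ : ∃ j, k = j + (n+1) := ⟨k - (n+1), by omega⟩
    rw [Function.iterate_add_apply, key]
    exact Function.iterate_fixed (by funext x; simp [fwdDiff]) j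

lemma vanish_sum {R : Type*} [CommRing R] (m r : R) (n : ℕ) :
    ∑ j ∈ Finset.range (n+2),
      (-1 : R) ^ j * ((n+1).choose j : R) * (m * (((n+1 : ℕ) : R) - (j : R)) + r) ^ n = 0 := by
  have H := fwdDiff_iter_eq_sum_shift (-m) (fun x : R => x ^ n) (n+1) (m * ((n+1 : ℕ) : R) + r)
  rw [congrFun (pow_fwdDiff_vanish (-m) n (n+1) n.lt_succ_self) _, Pi.zero_apply] at H
  have H2 : (0 : R) = (-1) ^ (n+1) * ∑ k ∈ range (n+2),
      ((-1 : ℤ) ^ (n+1-k) * ((n+1).choose k : ℤ)) • (m * ((n+1 : ℕ) : R) + r + k • (-m)) ^ n := by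
    rw [← H]; ring
  rw [H2, Finset.mul_sum]
  refine Finset.sum_congr rfl fun j hj => ?_
  have hj' : j ≤ n + 1 := by simpa [Nat.lt_succ_iff] using Finset.mem_range.mp hj
  have hsign : (-1 : R) ^ (n+1) * (-1) ^ (n+1-j) = (-1) ^ j := by
    rw [← pow_add, show n+1+(n+1-j) = j + 2*(n+1-j) from by omega, pow_add, pow_mul,
      neg_one_sq, one_pow, mul_one]
  have harg : m * ((n+1 : ℕ) : R) + r + j • (-m) = m * (((n+1 : ℕ) : R) - (j : R)) + r := by
    push_cast
    rw [nsmul_eq_mul]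
    ring
  rw [harg, zsmul_eq_mul]
  push_cast
  rw [← mul_assoc, ← mul_assoc, ← hsign]

theorem stmt16 {R : Type*} [CommRing R] (m r : R)
    (A : ℕ → ℤ → R)
    (hbound : ∀ (n : ℕ) (k : ℤ), (k < 0 ∨ (n : ℤ) < k) → A n k = 0)
    (hinit : A 0 0 = 1)
    (hrec : ∀ (n : ℕ) (k : ℤ), 0 ≤ k →
      A (n+1) k = (m * ((n : R) - (k : ℤ) + 2) - r) * A n (k-1) +
        (m * (k : ℤ) + r) * A n k) :
    ∀ n k : ℕ, k ≤ n →
      A n k = ∑ j ∈ Finset.range (k+1),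
        (-1) ^ j * ((n+1).choose j : R) * (m * ((k : R) - (j : R)) + r) ^ n := by
  intro n
  induction n with
  | zero =>
    intro k hk
    interval_cases k
    simpa using hinit
  | succ n IH =>
    have hS : ∀ k : ℕ, k ≤ n + 1 → A n (k : ℤ) = ∑ j ∈ Finset.range (k+1),
        (-1 : R) ^ j * ((n+1).choose j : R) * (m * ((k : R) - (j : R)) + r) ^ n := by
      intro k hk
      rcases Nat.lt_or_ge k (n+1) with h | h
      · exact IH k (by omega)
      · have hk1 : k = n + 1 := by omega
        subst hk1
        rw [hbound n ((n+1 : ℕ) : ℤ) (Or.inr (by exact_mod_cast Nat.lt_succ_self n))]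
        exact (vanish_sum m r n).symm
    intro k hk
    match k, hk with
    | 0, _ =>
      have h0 := hrec n 0 le_rfl
      norm_num at h0
      rw [hbound n (-1) (Or.inl (by norm_num))] at h0
      have := hS 0 (by omega)
      norm_num at this ⊢
      rw [h0, this]
      simp [Finset.sum_range_one]
      ring
    | (k'+1), hk =>
      have hk' : k' ≤ n := by omega
      have hrec' := hrec n ((k'+1 : ℕ) : ℤ) (by positivity)
      rw [show ((k'+1 : ℕ) : ℤ) - 1 = (k' : ℤ) from by push_cast; ring] at hrec'
      rw [hrec', hS k' (by omega), hS (k'+1) (by omega)]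
      rw [Finset.mul_sum, Finset.mul_sum]
      have hL0 : (-1 : R) ^ (0:ℕ) * (((n+1)+1).choose 0 : R) *
            (m * (((k'+1 : ℕ) : R) - ((0:ℕ) : R)) + r) ^ (n+1)
          = (m * (((k'+1 : ℕ) : ℤ) : R) + r) * ((-1 : R) ^ (0:ℕ) * ((n+1).choose 0 : R) *
            (m * (((k'+1 : ℕ) : R) - ((0:ℕ) : R)) + r) ^ n) := by
        simp only [Nat.choose_zero_right, Nat.cast_one]
        push_cast
        ring
      have h1 : ∀ i ∈ Finset.range (k'+1),
          (-1 : R) ^ (i+1) * (((n+1)+1).choose (i+1) : R) *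
            (m * (((k'+1 : ℕ) : R) - ((i+1 : ℕ) : R)) + r) ^ (n+1)
          = (m * ((n : R) - (((k'+1 : ℕ) : ℤ) : R) + 2) - r) *
              ((-1 : R) ^ i * ((n+1).choose i : R) * (m * ((k' : R) - (i : R)) + r) ^ n)
            + (m * (((k'+1 : ℕ) : ℤ) : R) + r) *
              ((-1 : R) ^ (i+1) * ((n+1).choose (i+1) : R) *
                (m * (((k'+1 : ℕ) : R) - ((i+1 : ℕ) : R)) + r) ^ n) := by
        intro i hi
        have hile : i ≤ n + 1 := by
          have := Finset.mem_range.mp hi; omega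
        have hckey : ((n+1).choose (i+1) : R) * ((i : R) + 1)
            = ((n+1).choose i : R) * (((n : R) + 1) - (i : R)) := by
          have h1 := Nat.choose_succ_right_eq (n+1) i
          have := congrArg (Nat.cast : ℕ → R) h1
          push_cast [Nat.cast_sub hile] at this
          linear_combination this
        rw [show ((n+1)+1).choose (i+1) = (n+1).choose i + (n+1).choose (i+1) from
          Nat.choose_succ_succ _ _]
        push_cast
        linear_combination ((-1 : R) ^ i * (m * ((k' : R) - (i : R)) + r) ^ n * m) * hckey
      symm
      calc ∑ j ∈ Finset.range (k'+1+1),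
            (-1 : R) ^ j * (((n+1)+1).choose j : R) *
              (m * (((k'+1 : ℕ) : R) - (j : R)) + r) ^ (n+1)
          = (∑ i ∈ Finset.range (k'+1), (-1 : R) ^ (i+1) * (((n+1)+1).choose (i+1) : R) *
              (m * (((k'+1 : ℕ) : R) - ((i+1 : ℕ) : R)) + r) ^ (n+1))
            + (-1 : R) ^ (0:ℕ) * (((n+1)+1).choose 0 : R) *
              (m * (((k'+1 : ℕ) : R) - ((0:ℕ) : R)) + r) ^ (n+1) := by
            exact Finset.sum_range_succ' _ _
        _ = (∑ i ∈ Finset.range (k'+1),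
              ((m * ((n : R) - (((k'+1 : ℕ) : ℤ) : R) + 2) - r) *
                ((-1 : R) ^ i * ((n+1).choose i : R) * (m * ((k' : R) - (i : R)) + r) ^ n)
              + (m * (((k'+1 : ℕ) : ℤ) : R) + r) *
                ((-1 : R) ^ (i+1) * ((n+1).choose (i+1) : R) *
                  (m * (((k'+1 : ℕ) : R) - ((i+1 : ℕ) : R)) + r) ^ n)))
            + (m * (((k'+1 : ℕ) : ℤ) : R) + r) * ((-1 : R) ^ (0:ℕ) * ((n+1).choose 0 : R) *
              (m * (((k'+1 : ℕ) : R) - ((0:ℕ) : R)) + r) ^ n) := by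
            rw [Finset.sum_congr rfl h1, hL0]
        _ = (∑ i ∈ Finset.range (k'+1),
              (m * ((n : R) - (((k'+1 : ℕ) : ℤ) : R) + 2) - r) *
                ((-1 : R) ^ i * ((n+1).choose i : R) * (m * ((k' : R) - (i : R)) + r) ^ n))
            + ((∑ i ∈ Finset.range (k'+1),
              (m * (((k'+1 : ℕ) : ℤ) : R) + r) *
                ((-1 : R) ^ (i+1) * ((n+1).choose (i+1) : R) *
                  (m * (((k'+1 : ℕ) : R) - ((i+1 : ℕ) : R)) + r) ^ n))
            + (m * (((k'+1 : ℕ) : ℤ) : R) + r) * ((-1 : R) ^ (0:ℕ) * ((n+1).choose 0 : R) *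
              (m * (((k'+1 : ℕ) : R) - ((0:ℕ) : R)) + r) ^ n)) := by
            rw [Finset.sum_add_distrib]; ring
        _ = _ := by
            rw [← Finset.sum_range_succ' (fun j => (m * (((k'+1 : ℕ) : ℤ) : R) + r) *
              ((-1 : R) ^ j * ((n+1).choose j : R) *
                (m * (((k'+1 : ℕ) : R) - (j : R)) + r) ^ n)) (k'+1)]
end

section
/- Let a_0, a_1, ... be pairwise distinct elements of a field and define \binom{n}{k}_{\mathbf{a}} = (-1)^{n-k}\left(\prod_{i=0}^{n-1}(a_n - a_i)\right)/\prod_{i=0, i\neq k}^{n}(a_k - a_i) for 0 \le k \le n. Then for 0 < k < n+1 the recurrence \binom{n+1}{k}_{\mathbf{a}} = \left(\prod_{j=0}^{n-1}\frac{a_{n+1}-a_{j+1}}{a_n-a_j}\right) \binom{n}{k}_{\mathbf{a}} + \binom{n}{k-1}_{\mathbf{a}'} holds, where \mathbf{a}' denotes the shifted sequence a_1, a_2, a_3, .... -/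
/-!
Put all three terms over the common denominator `D = ∏_{i ≤ n+1, i ≠ k} (a_k - a_i)` of
`binom(n+1, k)`. Dropping the factor `i = n+1` from `D` gives the denominator of `binom(n, k)`,
dropping `i = 0` gives that of the shifted coefficient, and the numerator of `binom(n+1, k)` is
`∏_{j<n} (a_{n+1} - a_{j+1})` times `a_{n+1} - a_0`. The recurrence then reduces to
`(a_k - a_{n+1}) - (a_k - a_0) = a_0 - a_{n+1}`.
-/

/-- The generalized a-binomial coefficient. -/
def abinom {F : Type*} [Field F] (a : ℕ → F) (n k : ℕ) : F :=
  (-1) ^ (n - k) * (∏ i ∈ Finset.range n, (a n - a i)) /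
    ∏ i ∈ (Finset.range (n+1)).erase k, (a k - a i)

open Finset

lemma prod_sub_ne_zero_of_notMem {F : Type*} [Field F] {a : ℕ → F}
    (ha : ∀ i j : ℕ, i ≠ j → a i ≠ a j) {s : Finset ℕ} {k : ℕ} (hk : k ∉ s) :
    ∏ i ∈ s, (a k - a i) ≠ 0 :=
  prod_ne_zero_iff.2 fun i hi => sub_ne_zero_of_ne (ha k i (by rintro rfl; exact hk hi))

lemma prod_erase_range_succ {M : Type*} [CommMonoid M] (f : ℕ → M) {m k : ℕ} (hk : k ≠ m) :
    ∏ i ∈ (range (m + 1)).erase k, f i = (∏ i ∈ (range m).erase k, f i) * f m := by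
  rw [range_add_one, erase_insert_of_ne hk.symm, prod_insert (by simp), mul_comm]

lemma prod_erase_succ_range_succ {M : Type*} [CommMonoid M] (f : ℕ → M) (m k : ℕ) :
    ∏ i ∈ (range (m + 1)).erase (k + 1), f i = f 0 * ∏ i ∈ (range m).erase k, f (i + 1) := by
  have h : (range (m + 1)).erase (k + 1) =
      insert 0 (((range m).erase k).map (addRightEmbedding 1)) := by
    ext (_ | i) <;> simp
  rw [h, prod_insert (by simp), prod_map]
  rfl

section

variable {F : Type*} [Field F] {a : ℕ → F}

lemma abinom_succ (a : ℕ → F) (n k : ℕ) :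
    abinom a (n + 1) k = (-1) ^ (n + 1 - k) * (∏ j ∈ range n, (a (n + 1) - a (j + 1))) *
      (a (n + 1) - a 0) / ∏ i ∈ (range (n + 2)).erase k, (a k - a i) := by
  rw [abinom, prod_range_succ', mul_assoc]

lemma prod_div_mul_abinom (ha : ∀ i j : ℕ, i ≠ j → a i ≠ a j) {n k : ℕ} (hk : k ≤ n) :
    (∏ j ∈ range n, (a (n + 1) - a (j + 1)) / (a n - a j)) * abinom a n k =
      (-1) ^ (n - k) * (∏ j ∈ range n, (a (n + 1) - a (j + 1))) * (a k - a (n + 1)) /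
        ∏ i ∈ (range (n + 2)).erase k, (a k - a i) := by
  have hP : ∏ j ∈ range n, (a n - a j) ≠ 0 := prod_sub_ne_zero_of_notMem ha (by simp)
  have hD : ∏ i ∈ (range (n + 1)).erase k, (a k - a i) ≠ 0 :=
    prod_sub_ne_zero_of_notMem ha (notMem_erase k _)
  have hlast : a k - a (n + 1) ≠ 0 := sub_ne_zero_of_ne (ha k (n + 1) (by omega))
  rw [prod_div_distrib, prod_erase_range_succ _ (by omega : k ≠ n + 1), abinom]
  field_simp

lemma abinom_shift (ha : ∀ i j : ℕ, i ≠ j → a i ≠ a j) (n k : ℕ) :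
    abinom (fun i => a (i + 1)) n k =
      (-1) ^ (n - k) * (∏ j ∈ range n, (a (n + 1) - a (j + 1))) * (a (k + 1) - a 0) /
        ∏ i ∈ (range (n + 2)).erase (k + 1), (a (k + 1) - a i) := by
  have hD : ∏ i ∈ (range (n + 1)).erase k, (a (k + 1) - a (i + 1)) ≠ 0 :=
    prod_sub_ne_zero_of_notMem (a := fun i => a (i + 1)) (fun i j h => ha _ _ (by omega))
      (notMem_erase k _)
  have hfirst : a (k + 1) - a 0 ≠ 0 := sub_ne_zero_of_ne (ha (k + 1) 0 (by omega))
  rw [prod_erase_succ_range_succ, abinom]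
  field_simp

end

theorem stmt18 {F : Type*} [Field F] (a : ℕ → F)
    (hdist : ∀ i j : ℕ, i ≠ j → a i ≠ a j) (n k : ℕ) (hk : 0 < k) (hkn : k < n + 1) :
    abinom a (n+1) k =
      (∏ j ∈ Finset.range n, (a (n+1) - a (j+1)) / (a n - a j)) * abinom a n k +
        abinom (fun i => a (i+1)) n (k-1) := by
  obtain ⟨k, rfl⟩ : ∃ k', k = k' + 1 := ⟨k - 1, by omega⟩
  rw [abinom_succ, prod_div_mul_abinom hdist (by omega), Nat.add_sub_cancel, abinom_shift hdist,
    show n + 1 - (k + 1) = n - (k + 1) + 1 by omega, show n - k = n - (k + 1) + 1 by omega]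
  ring
end
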